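/- Recursion (K1b): for every σ ∈ {0,1,…,r}^N, 𝐠(σ·r·0) = 𝐠((r-1)·σ), where σ·r·0 denotes σ with the entries r and then 0 appended and (r-1)·σ denotes σ with the entry r-1 prepended. -/

import Mathlib

open MvPolynomial

noncomputable section

/-- The field `F = ℚ(q,a,t)` of rational functions in three variables over `ℚ`. -/
abbrev KRF : Type := FractionRing (MvPolynomial (Fin 3) ℚ)

/-- The variable `q` in `F`. -/
def fq : KRF := algebraMap (MvPolynomial (Fin 3) ℚ) KRF (X 0)
/-- The variable `a` in `F`. -/
def fa : KRF := algebraMap (MvPolynomial (Fin 3) ℚ) KRF (X 1)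
/-- The variable `t` in `F`. -/
def ft : KRF := algebraMap (MvPolynomial (Fin 3) ℚ) KRF (X 2)

/-- The number `|v|` of ones in a binary sequence. -/
def onesCt (v : List Bool) : ℕ := v.count true

/-- A p-family: a function on (balanced) pairs of binary sequences with values in
`F = ℚ(q,a,t)` satisfying the five recursion rules (1)-(5). -/
def IsPFamily (p : List Bool → List Bool → KRF) : Prop :=
  (∀ n : ℕ, p [] (List.replicate n false) = ((1 + fa) / (1 - fq)) ^ n) ∧
  (∀ m : ℕ, p (List.replicate m false) [] = ((1 + fa) / (1 - fq)) ^ m) ∧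
  (∀ v w : List Bool, onesCt v = onesCt w →
      p (v ++ [true]) (w ++ [true]) = (ft ^ onesCt v + fa) * p v w) ∧
  (∀ v w : List Bool, onesCt v = onesCt w + 1 →
      p (v ++ [false]) (w ++ [true]) = p v (true :: w)) ∧
  (∀ v w : List Bool, onesCt v + 1 = onesCt w →
      p (v ++ [true]) (w ++ [false]) = p (true :: v) w) ∧
  (∀ v w : List Bool, onesCt v = onesCt w →
      p (v ++ [false]) (w ++ [false]) =
        ft ^ (-(onesCt v : ℤ)) * p (true :: v) (true :: w) +
          fq * ft ^ (-(onesCt v : ℤ)) * p (false :: v) (false :: w))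

/-- The symbols `1`, `0`, `∗` used in fillings. -/
inductive Symb : Type
  | one : Symb
  | zero : Symb
  | star : Symb
deriving DecidableEq

/-- An admissible filling of the `r × N` grid (rows indexed top-to-bottom by `Fin r`,
columns left-to-right by `Fin N`): every row and every column contains at most one `1`,
every cell strictly below a `1` in the same column is `∗`, and every other cell is `0`
(i.e. every `∗` lies strictly below a `1` in its column). -/
def IsAdmissible {r N : ℕ} (T : Fin r → Fin N → Symb) : Prop :=
  (∀ (i : Fin r) (j j' : Fin N), T i j = Symb.one → T i j' = Symb.one → j = j') ∧
  (∀ (j : Fin N) (i i' : Fin r), T i j = Symb.one → T i' j = Symb.one → i = i') ∧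
  (∀ (i i' : Fin r) (j : Fin N), T i j = Symb.one → i < i' → T i' j = Symb.star) ∧
  (∀ (i : Fin r) (j : Fin N), T i j = Symb.star → ∃ i' : Fin r, i' < i ∧ T i' j = Symb.one)

/-- `σ(T)_j`: the number of cells labeled `0` in the `j`-th column of `T`. -/
def colZeros {r N : ℕ} (T : Fin r → Fin N → Symb) (j : Fin N) : ℕ :=
  (Finset.univ.filter (fun i => T i j = Symb.zero)).card

/-- `v(T)_j = 1` iff the `j`-th column of `T` is occupied (contains a `1`). -/
def vFun {r N : ℕ} (T : Fin r → Fin N → Symb) (j : Fin N) : Bool :=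
  decide (∃ i : Fin r, T i j = Symb.one)

/-- The binary sequence `v(T)` as a list. -/
def vList {r N : ℕ} (T : Fin r → Fin N → Symb) : List Bool :=
  (List.finRange N).map (vFun T)

/-- The binary sequence `w(T)`: read the entries of `T` from left to right along each row,
taking the rows from bottom to top, skipping all cells labeled `∗` (with `1 ↦ true`,
`0 ↦ false`). -/
def wList {r N : ℕ} (T : Fin r → Fin N → Symb) : List Bool :=
  ((List.finRange r).reverse.map (fun i =>
    (List.finRange N).filterMap (fun j =>
      match T i j with
      | Symb.one => some true
      | Symb.zero => some false
      | Symb.star => none))).flatten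

namespace K1bAux

/-- The explicit admissible filling with column-zero-counts `c`. -/
def Efill (r : ℕ) {M : ℕ} (c : Fin M → ℕ) : Fin r → Fin M → Symb :=
  fun i j => if (i : ℕ) < c j then Symb.zero else if (i : ℕ) = c j then Symb.one else Symb.star

lemma adm_eq {r M : ℕ} (T : Fin r → Fin M → Symb) (hT : IsAdmissible T) :
    T = Efill r (colZeros T) := by
  obtain ⟨_hrow, hcol, hbelow, hstar⟩ := hT
  funext i j
  by_cases hone : ∃ i0, T i0 j = Symb.one
  · obtain ⟨i0, hi0⟩ := hone
    have hz : ∀ i' : Fin r, i' < i0 → T i' j = Symb.zero := by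
      intro i' hlt
      rcases h' : T i' j with _ | _ | _
      · exact absurd (hcol j i' i0 h' hi0) (by intro h; subst h; exact lt_irrefl _ hlt)
      · rfl
      · obtain ⟨i'', hi''lt, hi''⟩ := hstar i' j h'
        have := hcol j i'' i0 hi'' hi0
        subst this
        exact absurd (hi''lt.trans hlt) (lt_irrefl _)
    have hs : ∀ i' : Fin r, i0 < i' → T i' j = Symb.star := fun i' h => hbelow i0 i' j hi0 h
    have hcz : colZeros T j = (i0 : ℕ) := by
      unfold colZeros
      have hset : (Finset.univ.filter (fun i => T i j = Symb.zero)) = Finset.Iio i0 := by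
        ext i'
        simp only [Finset.mem_filter, Finset.mem_univ, true_and, Finset.mem_Iio]
        constructor
        · intro h
          rcases lt_trichotomy i' i0 with h1 | h1 | h1
          · exact h1
          · subst h1; rw [hi0] at h; exact absurd h (by simp)
          · rw [hs i' h1] at h; exact absurd h (by simp)
        · exact hz i'
      rw [hset, Fin.card_Iio]
    simp only [Efill, hcz]
    rcases lt_trichotomy (i : ℕ) (i0 : ℕ) with h | h | h
    · rw [if_pos h]; exact hz i h
    · rw [if_neg (by omega), if_pos h]
      have : i = i0 := Fin.ext h
      subst this; exact hi0
    · rw [if_neg (by omega), if_neg (by omega)]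
      exact hs i h
  · push_neg at hone
    have hz : ∀ i' : Fin r, T i' j = Symb.zero := by
      intro i'
      rcases h' : T i' j with _ | _ | _
      · exact absurd h' (hone i')
      · rfl
      · obtain ⟨i'', _, hi''⟩ := hstar i' j h'
        exact absurd hi'' (hone i'')
    have hcz : colZeros T j = r := by
      unfold colZeros
      rw [Finset.filter_true_of_mem (fun i _ => hz i)]
      simp
    simp only [Efill, hcz]
    rw [if_pos i.isLt]
    exact hz i

lemma Efill_congr {r M : ℕ} {c c' : Fin M → ℕ} (h : ∀ j, c j = c' j) :
    Efill r c = Efill r c' := by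
  funext i j; simp only [Efill, h j]

lemma vList_Efill {r M : ℕ} (c : Fin M → ℕ) :
    vList (Efill r c) = (List.finRange M).map (fun j => decide (c j < r)) := by
  unfold vList
  apply List.map_congr_left
  intro j _
  simp only [vFun, decide_eq_decide]
  constructor
  · rintro ⟨i, hi⟩
    simp only [Efill] at hi
    split_ifs at hi with h1 h2
    · exact h2 ▸ i.isLt
  · intro h
    exact ⟨⟨c j, h⟩, by simp [Efill]⟩

/-- The reading of one cell with zero-count `c`, row `i`. -/
def rd (c : ℕ) (i : ℕ) : Option Bool :=
  if i < c then some false else if i = c then some true else none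

lemma wList_Efill {r M : ℕ} (c : Fin M → ℕ) :
    wList (Efill r c) =
      ((List.finRange r).reverse.map (fun i : Fin r =>
        (List.finRange M).filterMap (fun j => rd (c j) (i : ℕ)))).flatten := by
  unfold wList
  congr 1
  apply List.map_congr_left
  intro i _
  congr 1
  funext j
  simp only [Efill, rd]
  split_ifs <;> rfl

lemma tele (k : ℕ) (s : ℕ → List Bool) :
    ((List.finRange k).reverse.map (fun i : Fin k => s ((i : ℕ) + 1) ++ [false])).flatten ++ s 0
    = s k ++ ((List.finRange k).reverse.map (fun i : Fin k => false :: s (i : ℕ))).flatten := by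
  induction k generalizing s with
  | zero => simp
  | succ k ih =>
    rw [List.finRange_succ]
    simp only [List.reverse_cons, List.map_reverse, List.map_map, ← List.map_reverse,
      List.map_append, List.flatten_append, Function.comp_def, Fin.val_succ, Fin.val_zero,
      List.map_cons, List.map_nil, List.flatten_cons, List.flatten_nil, List.append_nil]
    have ih' := ih (fun n => s (n + 1))
    calc (((List.finRange k).reverse.map fun i : Fin k => s ((i : ℕ) + 1 + 1) ++ [false]).flatten
            ++ (s 1 ++ [false])) ++ s 0
        = (((List.finRange k).reverse.map fun i : Fin k => s ((i : ℕ) + 1 + 1) ++ [false]).flatten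
            ++ s 1) ++ ([false] ++ s 0) := by simp [List.append_assoc]
      _ = (s (k + 1) ++ ((List.finRange k).reverse.map fun i : Fin k => false :: s ((i : ℕ) + 1)).flatten)
            ++ (false :: s 0) := by rw [ih']; rfl
      _ = s (k + 1) ++ (((List.finRange k).reverse.map fun i : Fin k => false :: s ((i : ℕ) + 1)).flatten
            ++ (false :: s 0)) := by simp [List.append_assoc]

lemma count_filterMap_true {α : Type*} (f : α → Option Bool) (l : List α) :
    (l.filterMap f).count true = l.countP (fun x => f x == some true) := by
  induction l with
  | nil => simp
  | cons a l ih =>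
    rw [List.filterMap_cons, List.countP_cons]
    cases h : f a with
    | none => simp [h, ih]
    | some b =>
      cases b <;> simp [h, ih, List.count_cons]

lemma countP_eq_sum_map {α : Type*} (p : α → Bool) (l : List α) :
    l.countP p = (l.map (fun x => if p x then 1 else 0)).sum := by
  induction l with
  | nil => simp
  | cons a l ih =>
    rw [List.countP_cons, List.map_cons, List.sum_cons, ih]
    split_ifs <;> omega

lemma balance (r M : ℕ) (c : Fin M → ℕ) :
    onesCt (wList (Efill r c)) = onesCt (vList (Efill r c)) := by
  rw [wList_Efill, vList_Efill]
  unfold onesCt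
  rw [List.count_flatten, List.map_map, List.map_reverse, List.sum_reverse]
  have hrd : ∀ c' i : ℕ, (rd c' i == some true) = decide (c' = i) := by
    intro c' i
    unfold rd
    split_ifs with h1 h2 <;> simp <;> omega
  have hrow : ∀ i : Fin r,
      ((List.finRange M).filterMap (fun j => rd (c j) (i : ℕ))).count true
        = ∑ j : Fin M, if c j = (i : ℕ) then 1 else 0 := by
    intro i
    rw [count_filterMap_true]
    have : (fun j : Fin M => rd (c j) (i : ℕ) == some true)
        = (fun j : Fin M => decide (c j = (i : ℕ))) := by
      funext j; exact hrd (c j) (i : ℕ)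
    rw [this, countP_eq_sum_map]
    rw [← Fin.sum_univ_def]
    apply Finset.sum_congr rfl
    intro j _
    simp
  rw [← Fin.sum_univ_def]
  have hR : ((List.finRange M).map fun j => decide (c j < r)).count true
      = ∑ j : Fin M, if c j < r then 1 else 0 := by
    rw [List.count_eq_countP, countP_eq_sum_map, List.map_map, ← Fin.sum_univ_def]
    apply Finset.sum_congr rfl
    intro j _
    simp
  rw [hR]
  trans ∑ i : Fin r, ∑ j : Fin M, if c j = (i : ℕ) then 1 else 0
  · exact Finset.sum_congr rfl (fun i _ => hrow i)
  rw [Finset.sum_comm]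
  apply Finset.sum_congr rfl
  intro j _
  by_cases h : c j < r
  · rw [if_pos h]
    rw [Finset.sum_eq_single (⟨c j, h⟩ : Fin r)]
    · simp
    · intro i _ hne
      rw [if_neg]
      intro he
      exact hne (Fin.ext he.symm)
    · intro hmem; exact absurd (Finset.mem_univ _) hmem
  · rw [if_neg h]
    apply Finset.sum_eq_zero
    intro i _
    rw [if_neg]
    intro he
    exact h (he ▸ i.isLt)

end K1bAux

/-- Recursion (K1b): `𝐠(σ·r·0) = 𝐠((r-1)·σ)`.
Here `𝐠(σ) = p(v(σ), w(σ)·0)`, with `T1` (resp. `T2`) the unique admissible filling whose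
column-zero-counts are `σ·r·0` (i.e. `Fin.snoc (Fin.snoc σ r) 0`) (resp. `(r-1)·σ`, i.e.
`Fin.cons (r-1) σ`). -/
theorem g_recursion_K1b (p : List Bool → List Bool → KRF) (hp : IsPFamily p)
    (r : ℕ) (hr : 1 ≤ r) (N : ℕ) (σ : Fin N → ℕ) (hσ : ∀ i, σ i ≤ r)
    (T1 : Fin r → Fin (N + 2) → Symb) (hT1 : IsAdmissible T1)
    (hT1σ : ∀ j, colZeros T1 j = (Fin.snoc (Fin.snoc σ r : Fin (N + 1) → ℕ) 0 : Fin (N + 2) → ℕ) j)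
    (T2 : Fin r → Fin (N + 1) → Symb) (hT2 : IsAdmissible T2)
    (hT2σ : ∀ j, colZeros T2 j = (Fin.cons (r - 1) σ : Fin (N + 1) → ℕ) j) :
    p (vList T1) (wList T1 ++ [false]) = p (vList T2) (wList T2 ++ [false]) := by
  classical
  obtain ⟨k, rfl⟩ : ∃ k, r = k + 1 := ⟨r - 1, by omega⟩
  set c1 : Fin (N + 2) → ℕ := Fin.snoc (Fin.snoc σ (k + 1)) 0 with hc1def
  set c2 : Fin (N + 1) → ℕ := Fin.cons (k + 1 - 1) σ with hc2def
  have e1 : T1 = K1bAux.Efill (k + 1) c1 := by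
    rw [K1bAux.adm_eq T1 hT1]; exact K1bAux.Efill_congr hT1σ
  have e2 : T2 = K1bAux.Efill (k + 1) c2 := by
    rw [K1bAux.adm_eq T2 hT2]; exact K1bAux.Efill_congr hT2σ
  rw [e1, e2]
  set v : List Bool := (List.finRange N).map (fun j => decide (σ j < k + 1)) with hv
  set srow : ℕ → List Bool :=
    fun i => (List.finRange N).filterMap (fun j => K1bAux.rd (σ j) i) with hsrow
  -- the `v`-lists
  have hv1 : vList (K1bAux.Efill (k + 1) c1) = v ++ [false, true] := by
    rw [K1bAux.vList_Efill, List.finRange_succ_last, List.map_append, List.map_map,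
      List.finRange_succ_last, hc1def]
    simp only [Function.comp_def, Fin.snoc_castSucc, Fin.snoc_last, List.map_append,
      List.map_map, List.map_cons, List.map_nil]
    simp [hv, List.append_assoc, Nat.lt_irrefl]
  have hv2 : vList (K1bAux.Efill (k + 1) c2) = true :: v := by
    rw [K1bAux.vList_Efill, List.finRange_succ, hc2def]
    simp only [List.map_cons, List.map_map, Function.comp_def, Fin.cons_zero, Fin.cons_succ]
    simp [hv]
  -- rows of the two fillings
  have hrow1 : ∀ i : ℕ, i < k + 1 →
      (List.finRange (N + 2)).filterMap (fun j => K1bAux.rd (c1 j) i)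
        = (srow i ++ [false]) ++ (if i = 0 then [true] else []) := by
    intro i hi
    rw [List.finRange_succ_last, List.filterMap_append, List.filterMap_map, hc1def]
    simp only [Function.comp_def, Fin.snoc_castSucc, Fin.snoc_last]
    rw [List.finRange_succ_last, List.filterMap_append, List.filterMap_map]
    simp only [Function.comp_def, Fin.snoc_castSucc, Fin.snoc_last]
    have h1 : K1bAux.rd (k + 1) i = some false := by
      simp [K1bAux.rd, hi]
    have h2 : K1bAux.rd 0 i = if i = 0 then some true else none := by
      simp [K1bAux.rd]
    rw [List.filterMap_cons, List.filterMap_cons]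
    simp only [Fin.snoc_last, h1, h2, List.filterMap_nil]
    by_cases h0 : i = 0 <;> simp [h0, hsrow, List.append_assoc]
  have hrow2 : ∀ i : ℕ, i < k + 1 →
      (List.finRange (N + 1)).filterMap (fun j => K1bAux.rd (c2 j) i)
        = (if i = k then true else false) :: srow i := by
    intro i hi
    rw [List.finRange_succ, List.filterMap_cons, List.filterMap_map, hc2def]
    have h1 : K1bAux.rd (k + 1 - 1) i = some (if i = k then true else false) := by
      have hk : k + 1 - 1 = k := rfl
      rw [hk]
      rcases lt_trichotomy i k with h | h | h
      · simp [K1bAux.rd, h, Nat.ne_of_lt h]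
      · simp [K1bAux.rd, h]
      · omega
    simp only [Function.comp_def, Fin.cons_zero, Fin.cons_succ, h1]
    rfl
  -- the `w`-lists
  have hw1 : wList (K1bAux.Efill (k + 1) c1)
      = ((List.finRange k).reverse.map
          (fun i : Fin k => srow ((i : ℕ) + 1) ++ [false])).flatten
        ++ (srow 0 ++ [false] ++ [true]) := by
    rw [K1bAux.wList_Efill]
    have hmap : (List.finRange (k + 1)).reverse.map
          (fun i : Fin (k + 1) =>
            (List.finRange (N + 2)).filterMap (fun j => K1bAux.rd (c1 j) (i : ℕ)))
        = (List.finRange (k + 1)).reverse.map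
          (fun i : Fin (k + 1) =>
            (srow (i : ℕ) ++ [false]) ++ (if (i : ℕ) = 0 then [true] else [])) :=
      List.map_congr_left (fun i _ => hrow1 (i : ℕ) i.isLt)
    rw [hmap, List.finRange_succ]
    simp [List.reverse_cons, List.map_append, List.map_map, List.flatten_append,
      Function.comp_def, List.append_assoc]
  have hw2 : wList (K1bAux.Efill (k + 1) c2)
      = (true :: srow k)
        ++ ((List.finRange k).reverse.map (fun i : Fin k => false :: srow (i : ℕ))).flatten := by
    rw [K1bAux.wList_Efill]
    have hmap : (List.finRange (k + 1)).reverse.map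
          (fun i : Fin (k + 1) =>
            (List.finRange (N + 1)).filterMap (fun j => K1bAux.rd (c2 j) (i : ℕ)))
        = (List.finRange (k + 1)).reverse.map
          (fun i : Fin (k + 1) => (if (i : ℕ) = k then true else false) :: srow (i : ℕ)) :=
      List.map_congr_left (fun i _ => hrow2 (i : ℕ) i.isLt)
    rw [hmap, List.finRange_succ_last]
    simp [List.reverse_append, List.map_append, List.map_map, List.flatten_append,
      Function.comp_def, List.append_assoc]
    congr 1
    congr 1
    exact List.map_congr_left fun x _ => by simp [Nat.ne_of_lt x.isLt]
  -- the key combinatorial identity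
  have hkey : true :: wList (K1bAux.Efill (k + 1) c1)
      = (wList (K1bAux.Efill (k + 1) c2) ++ [false]) ++ [true] := by
    rw [hw1, hw2]
    have ht := K1bAux.tele k srow
    have h1 : ((List.finRange k).reverse.map
          (fun i : Fin k => srow ((i : ℕ) + 1) ++ [false])).flatten
          ++ (srow 0 ++ [false] ++ [true])
        = ((srow k ++ ((List.finRange k).reverse.map
            (fun i : Fin k => false :: srow (i : ℕ))).flatten) ++ [false]) ++ [true] := by
      rw [← ht]
      simp [List.append_assoc]
    rw [h1]
    simp [List.append_assoc]
  obtain ⟨W, hW2, hW1⟩ : ∃ W, wList (K1bAux.Efill (k + 1) c2) ++ [false] = true :: W ∧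
      wList (K1bAux.Efill (k + 1) c1) = W ++ [true] := by
    cases hL : wList (K1bAux.Efill (k + 1) c2) ++ [false] with
    | nil => exact absurd hL (by simp)
    | cons b W =>
      rw [hL] at hkey
      simp only [List.cons_append, List.cons.injEq] at hkey
      obtain ⟨hb', hW'⟩ := hkey
      subst hb'
      exact ⟨W, rfl, hW'⟩
  -- balancedness
  have hbal : onesCt v = onesCt W := by
    have hb := K1bAux.balance (k + 1) (N + 1) c2
    rw [hv2] at hb
    have h2 : (wList (K1bAux.Efill (k + 1) c2) ++ [false]).count true
        = (wList (K1bAux.Efill (k + 1) c2)).count true := by simp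
    rw [hW2] at h2
    unfold onesCt at hb ⊢
    rw [← h2] at hb
    rw [List.count_cons_self, List.count_cons_self] at hb
    exact Nat.add_right_cancel hb.symm
  -- conclude using rules (4) and (3)
  rw [hv1, hv2, hW1, hW2]
  unfold onesCt at hbal
  have h4 := hp.2.2.2.2.1 (v ++ [false]) (W ++ [true]) (by
    unfold onesCt
    rw [List.count_append, List.count_append]
    simp [hbal])
  have h3 := hp.2.2.2.1 (true :: v) W (by
    unfold onesCt
    rw [List.count_cons_self, hbal])
  calc p (v ++ [false, true]) ((W ++ [true]) ++ [false])
      = p ((v ++ [false]) ++ [true]) ((W ++ [true]) ++ [false]) := by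
        rw [show v ++ [false, true] = (v ++ [false]) ++ [true] from by simp]
    _ = p (true :: (v ++ [false])) (W ++ [true]) := h4
    _ = p ((true :: v) ++ [false]) (W ++ [true]) := rfl
    _ = p (true :: v) (true :: W) := h3
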